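/- Suppose a valid level scheme is non-improvable, in the sense that every vertex v with ℓ(v) ≥ 1 satisfies W_v(ℓ(v) − 1) > c_v (i.e., no vertex can drop its own level by one while keeping its own weight constraint). Then the scheme is (β + 1)-tight: W_v > c_v/(β + 1) for every vertex v with ℓ(v) ≥ 1. -/

import Mathlib

open scoped Classical

/-- `D_v(i)`: the number of neighbors of `v` whose level equals `i`. -/
noncomputable def levelCount {V : Type*} [Fintype V] (G : SimpleGraph V)
    (ℓ : V → ℕ) (v : V) (i : ℕ) : ℕ :=
  (Finset.univ.filter fun u => G.Adj v u ∧ ℓ u = i).card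

/-- `D_v(i, j)`: the number of neighbors of `v` whose level lies in `[i, j]`. -/
noncomputable def levelCountRange {V : Type*} [Fintype V] (G : SimpleGraph V)
    (ℓ : V → ℕ) (v : V) (i j : ℕ) : ℕ :=
  (Finset.univ.filter fun u => G.Adj v u ∧ i ≤ ℓ u ∧ ℓ u ≤ j).card

/-- The weight of a vertex `v`:
`W_v = min{k_v, D_v(0, ℓ(v))}·μ·β^(−ℓ(v)) + Σ_{i > ℓ(v)} min{k_v, D_v(i)}·μ·β^(−i)`. -/
noncomputable def vertexWeight {V : Type*} [Fintype V] (G : SimpleGraph V)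
    (β μ : ℝ) (k : V → ℕ) (ℓ : V → ℕ) (v : V) : ℝ :=
  (min (k v) (levelCountRange G ℓ v 0 (ℓ v)) : ℝ) * μ * β ^ (-(ℓ v : ℤ))
    + ∑' i : ℕ, if ℓ v < i then (min (k v) (levelCount G ℓ v i) : ℝ) * μ * β ^ (-(i : ℤ)) else 0

/-!
Lowering `ℓ v = n + 1` to `n` leaves every neighbour count unchanged, since `G` has no loops. In
`W_v(n)` the head coefficient `min{k_v, D_v(0, n)}` is at most the head coefficient
`A = min{k_v, D_v(0, n + 1)}` of `W_v`, but now carries the larger factor `β^(-n) = β · β^(-(n+1))`;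
and the level-`(n + 1)` term moves from the head into the tail, where it is at most `A·μ·β^(-(n+1))`.
Hence `W_v(n) ≤ (β + 1)·W_v`, and non-improvability `c_v < W_v(n)` gives the claim.
-/

section LevelScheme

variable {V : Type*} [Fintype V] (G : SimpleGraph V) (β μ : ℝ) (k ℓ : V → ℕ) (v : V)

noncomputable def levelTerm (i : ℕ) : ℝ :=
  (min (k v) (levelCount G ℓ v i) : ℝ) * μ * β ^ (-(i : ℤ))

noncomputable def tailWeight (n : ℕ) : ℝ :=
  ∑' i : ℕ, if n < i then levelTerm G β μ k ℓ v i else 0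

theorem vertexWeight_eq_add_tailWeight :
    vertexWeight G β μ k ℓ v =
      (min (k v) (levelCountRange G ℓ v 0 (ℓ v)) : ℝ) * μ * β ^ (-(ℓ v : ℤ))
        + tailWeight G β μ k ℓ v (ℓ v) :=
  rfl

theorem levelCount_update_self (n i : ℕ) :
    levelCount G (Function.update ℓ v n) v i = levelCount G ℓ v i := by
  unfold levelCount
  congr 1
  refine Finset.filter_congr fun u _ => and_congr_right fun hvu => ?_
  rw [Function.update_of_ne hvu.ne']

theorem levelCountRange_update_self (n i j : ℕ) :
    levelCountRange G (Function.update ℓ v n) v i j = levelCountRange G ℓ v i j := by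
  unfold levelCountRange
  congr 1
  refine Finset.filter_congr fun u _ => and_congr_right fun hvu => ?_
  rw [Function.update_of_ne hvu.ne']

theorem levelCount_le_levelCountRange_zero (i : ℕ) :
    levelCount G ℓ v i ≤ levelCountRange G ℓ v 0 i :=
  Finset.card_le_card <| Finset.monotone_filter_right _ fun _ _ ⟨hvu, hu⟩ => ⟨hvu, by omega⟩

theorem levelCountRange_mono_right {i j j' : ℕ} (hj : j ≤ j') :
    levelCountRange G ℓ v i j ≤ levelCountRange G ℓ v i j' :=
  Finset.card_le_card <|
    Finset.monotone_filter_right _ fun _ _ ⟨hvu, hi, hu⟩ => ⟨hvu, hi, hu.trans hj⟩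

theorem support_levelCount_subset_range : Function.support (levelCount G ℓ v) ⊆ Set.range ℓ := by
  intro i hi
  obtain ⟨u, hu⟩ := Finset.card_ne_zero.mp hi
  exact ⟨u, (Finset.mem_filter.mp hu).2.2⟩

theorem finite_support_levelTerm : (Function.support (levelTerm G β μ k ℓ v)).Finite := by
  refine (Set.finite_range ℓ).subset fun i hi => ?_
  refine support_levelCount_subset_range G ℓ v fun hzero => hi ?_
  simp [levelTerm, hzero]

theorem tailWeight_eq_levelTerm_add_tailWeight (n : ℕ) :
    tailWeight G β μ k ℓ v n = levelTerm G β μ k ℓ v (n + 1) + tailWeight G β μ k ℓ v (n + 1) := by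
  have hsummable (p : ℕ → Prop) [DecidablePred p] :
      Summable fun i => if p i then levelTerm G β μ k ℓ v i else 0 :=
    summable_of_hasFiniteSupport <| (finite_support_levelTerm G β μ k ℓ v).subset <|
      Function.support_subset_iff'.2 fun i hi => by simp [Function.notMem_support.1 hi]
  have hsplit : (fun i => if n < i then levelTerm G β μ k ℓ v i else 0) =
      fun i => (if i = n + 1 then levelTerm G β μ k ℓ v i else 0)
        + if n + 1 < i then levelTerm G β μ k ℓ v i else 0 := by
    funext i
    rcases lt_trichotomy i (n + 1) with h | rfl | h
    · simp [h.ne, show ¬n < i by omega, show ¬n + 1 < i by omega]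
    · simp
    · simp [h.ne', h, show n < i by omega]
  rw [tailWeight, hsplit, (hsummable _).tsum_add (hsummable _), tsum_ite_eq]
  rfl

variable {G β μ k ℓ v}

theorem levelTerm_nonneg (hβ : 0 ≤ β) (hμ : 0 ≤ μ) (i : ℕ) : 0 ≤ levelTerm G β μ k ℓ v i := by
  unfold levelTerm
  positivity

theorem tailWeight_nonneg (hβ : 0 ≤ β) (hμ : 0 ≤ μ) (n : ℕ) : 0 ≤ tailWeight G β μ k ℓ v n :=
  tsum_nonneg fun i => by split_ifs <;> first | exact levelTerm_nonneg hβ hμ i | exact le_rfl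

theorem levelTerm_le (hβ : 0 ≤ β) (hμ : 0 ≤ μ) (i : ℕ) :
    levelTerm G β μ k ℓ v i ≤ (min (k v) (levelCountRange G ℓ v 0 i) : ℝ) * μ * β ^ (-(i : ℤ)) := by
  unfold levelTerm
  gcongr
  exact levelCount_le_levelCountRange_zero G ℓ v i

theorem vertexWeight_update_self (n : ℕ) :
    vertexWeight G β μ k (Function.update ℓ v n) v =
      (min (k v) (levelCountRange G ℓ v 0 n) : ℝ) * μ * β ^ (-(n : ℤ))
        + tailWeight G β μ k ℓ v n := by
  simp only [vertexWeight_eq_add_tailWeight, Function.update_self, levelCountRange_update_self,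
    tailWeight, levelTerm, levelCount_update_self]

theorem vertexWeight_update_self_le (hβ : 0 < β) (hμ : 0 ≤ μ) {n : ℕ} (hn : ℓ v = n + 1) :
    vertexWeight G β μ k (Function.update ℓ v n) v ≤ (β + 1) * vertexWeight G β μ k ℓ v := by
  rw [vertexWeight_update_self, vertexWeight_eq_add_tailWeight, hn,
    tailWeight_eq_levelTerm_add_tailWeight]
  set A : ℝ := min (k v) (levelCountRange G ℓ v 0 (n + 1))
  set p : ℝ := β ^ (-((n + 1 : ℕ) : ℤ))
  set T := tailWeight G β μ k ℓ v (n + 1)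
  have hpow : β ^ (-(n : ℤ)) = β * p := by
    rw [← zpow_one_add₀ hβ.ne']
    push_cast
    ring_nf
  have hhead : (min (k v) (levelCountRange G ℓ v 0 n) : ℝ) * μ * β ^ (-(n : ℤ)) ≤ β * (A * μ * p) := by
    have hmono : (min (k v) (levelCountRange G ℓ v 0 n) : ℝ) ≤ A := by
      simp only [A]
      exact_mod_cast min_le_min_left (k v) (levelCountRange_mono_right G ℓ v (i := 0) n.le_succ)
    rw [hpow, mul_left_comm β]
    gcongr
  have hterm : levelTerm G β μ k ℓ v (n + 1) ≤ A * μ * p := levelTerm_le hβ.le hμ (n + 1)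
  have hT : 0 ≤ β * T := mul_nonneg hβ.le (tailWeight_nonneg hβ.le hμ (n + 1))
  linarith

end LevelScheme

theorem non_improvable_is_tight_general {V : Type*} [Fintype V] (G : SimpleGraph V)
    (c : V → ℝ) (k : V → ℕ) (β μ : ℝ) (ℓ : V → ℕ)
    (hc : ∀ v, 0 < c v) (hβ : 1 < β) (hμ : ∀ v, c v < μ)
    (hnonimp : ∀ v, 1 ≤ ℓ v → c v < vertexWeight G β μ k (Function.update ℓ v (ℓ v - 1)) v) :
    ∀ v, 1 ≤ ℓ v → c v / (β + 1) < vertexWeight G β μ k ℓ v := by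
  intro v hv
  obtain ⟨n, hn⟩ : ∃ n, ℓ v = n + 1 := ⟨ℓ v - 1, by omega⟩
  have hlower : c v < vertexWeight G β μ k (Function.update ℓ v n) v := by
    simpa [hn] using hnonimp v hv
  have hμ0 : 0 ≤ μ := ((hc v).trans (hμ v)).le
  have hβ0 : 0 < β := one_pos.trans hβ
  rw [div_lt_iff₀ (by linarith)]
  linarith [vertexWeight_update_self_le (G := G) (k := k) hβ0 hμ0 hn]

/-- A non-improvable valid level scheme (no vertex of positive level can drop its own level by one
while keeping its own weight constraint) is `(β + 1)`-tight:
`W_v > c_v/(β + 1)` for every vertex `v` of level at least `1`. -/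
theorem non_improvable_is_tight {V : Type*} [Fintype V] (G : SimpleGraph V)
    (c : V → ℝ) (k : V → ℕ) (β μ : ℝ) (ℓ : V → ℕ)
    (hc : ∀ v, 0 < c v) (hk : ∀ v, 1 ≤ k v) (hβ : 1 < β) (hμ : ∀ v, c v < μ)
    (hvalid : ∀ v, vertexWeight G β μ k ℓ v ≤ c v)
    (hnonimp : ∀ v, 1 ≤ ℓ v → c v < vertexWeight G β μ k (Function.update ℓ v (ℓ v - 1)) v) :
    ∀ v, 1 ≤ ℓ v → c v / (β + 1) < vertexWeight G β μ k ℓ v :=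
  non_improvable_is_tight_general G c k β μ ℓ hc hβ hμ hnonimp
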